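/- arXiv:2010.10490 — 6 statements merged into one kernel-verified Lean document; each statement's English description precedes it below -/
import Mathlib

section
/- For all real numbers ξ1, ξ2 > 0 one has (1/(4π²√(ξ1ξ2))) · ( ∫_{{(u1,u2) ∈ ℝ² : u1 ≥ u2}} e^{−u1²/ξ1 − u2²/ξ2} · u1 du1du2 + ∫_{{(u1,u2) ∈ ℝ² : u2 ≥ u1}} e^{−u1²/ξ1 − u2²/ξ2} · u2 du1du2 ) = √(ξ1 + ξ2) / (8π^{3/2}). -/
/-!
Integrating first in the coordinate that is the maximum,
`∫_{x ≥ y} x e^{-x²/ξ₁} dx = (ξ₁/2) e^{-y²/ξ₁}` leaves the one-dimensional Gaussian integral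
`∫ e^{-y²(1/ξ₁ + 1/ξ₂)} dy = √(π ξ₁ ξ₂ / (ξ₁ + ξ₂))`. The second region is the first with the
coordinates swapped, so the two integrals add up to `((ξ₁ + ξ₂)/2) √(π ξ₁ ξ₂ / (ξ₁ + ξ₂))`.
-/

open MeasureTheory Real Set Filter

theorem integral_Ioi_mul_exp_neg_mul_sq {b : ℝ} (hb : 0 < b) (a : ℝ) :
    ∫ x in Ioi a, x * exp (-b * x ^ 2) = exp (-b * a ^ 2) / (2 * b) := by
  have hderiv : ∀ x ∈ Ici a,
      HasDerivAt (fun x ↦ -(2 * b)⁻¹ * exp (-b * x ^ 2)) (x * exp (-b * x ^ 2)) x := by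
    intro x _
    refine (((hasDerivAt_pow 2 x).const_mul (-b)).exp.const_mul (-(2 * b)⁻¹)).congr_deriv ?_
    field_simp
    ring
  have hlim : Tendsto (fun x ↦ -(2 * b)⁻¹ * exp (-b * x ^ 2)) atTop (nhds (-(2 * b)⁻¹ * 0)) :=
    (tendsto_exp_atBot.comp
      ((tendsto_pow_atTop two_ne_zero).const_mul_atTop_of_neg (neg_lt_zero.2 hb))).const_mul _
  rw [integral_Ioi_of_hasDerivAt_of_tendsto' hderiv
    (integrable_mul_exp_neg_mul_sq hb).integrableOn hlim]
  field_simp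
  ring

theorem setIntegral_snd_le_fst_mul {g h : ℝ → ℝ} (hg : Integrable g) (hh : Integrable h) :
    ∫ u in {u : ℝ × ℝ | u.2 ≤ u.1}, g u.1 * h u.2 = ∫ y, h y * ∫ x in Ici y, g x := by
  have hS : MeasurableSet {u : ℝ × ℝ | u.2 ≤ u.1} := measurableSet_le measurable_snd measurable_fst
  have hsection : ∀ x y : ℝ, {u : ℝ × ℝ | u.2 ≤ u.1}.indicator (fun u ↦ g u.1 * h u.2) (x, y)
      = h y * (Ici y).indicator g x := by
    intro x y
    by_cases hxy : y ≤ x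
    · simp [indicator_of_mem, hxy, mul_comm]
    · simp [indicator_of_notMem, hxy]
  rw [← integral_indicator hS, Measure.volume_eq_prod,
    integral_prod_symm _ ((hg.mul_prod hh).indicator hS)]
  simp_rw [hsection, integral_const_mul, integral_indicator measurableSet_Ici]

theorem setIntegral_fst_le_snd_eq_swap {E : Type*} [NormedAddCommGroup E] [NormedSpace ℝ E]
    (f : ℝ × ℝ → E) :
    ∫ u in {u : ℝ × ℝ | u.1 ≤ u.2}, f u = ∫ u in {u : ℝ × ℝ | u.2 ≤ u.1}, f u.swap :=
  ((Measure.measurePreserving_swap).setIntegral_preimage_emb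
    MeasurableEquiv.prodComm.measurableEmbedding f _).symm

theorem setIntegral_snd_le_fst_mul_exp_neg_mul_sq {a b : ℝ} (ha : 0 < a) (hb : 0 < b) :
    ∫ u in {u : ℝ × ℝ | u.2 ≤ u.1}, u.1 * exp (-a * u.1 ^ 2) * exp (-b * u.2 ^ 2)
      = √(π / (a + b)) / (2 * a) := by
  rw [setIntegral_snd_le_fst_mul (integrable_mul_exp_neg_mul_sq ha)
    (integrable_exp_neg_mul_sq hb)]
  simp_rw [integral_Ici_eq_integral_Ioi, integral_Ioi_mul_exp_neg_mul_sq ha, mul_div_assoc',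
    ← exp_add, ← add_mul, ← neg_add, add_comm b a, integral_div, integral_gaussian]

/-- For all real numbers `ξ1, ξ2 > 0`, the constant `K₀` of the main theorem in the case `J = 2`
equals the constant `√(ξ1+ξ2)/(8π^{3/2})` predicted by Hejhal's conjecture. -/
theorem stmt_0 (ξ1 ξ2 : ℝ) (hξ1 : 0 < ξ1) (hξ2 : 0 < ξ2) :
    (1 / (4 * Real.pi ^ 2 * Real.sqrt (ξ1 * ξ2))) *
      ((∫ u in {u : ℝ × ℝ | u.2 ≤ u.1},
          Real.exp (-u.1 ^ 2 / ξ1 - u.2 ^ 2 / ξ2) * u.1) +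
        ∫ u in {u : ℝ × ℝ | u.1 ≤ u.2},
          Real.exp (-u.1 ^ 2 / ξ1 - u.2 ^ 2 / ξ2) * u.2) =
    Real.sqrt (ξ1 + ξ2) / (8 * Real.pi ^ ((3 : ℝ) / 2)) := by
  have hsplit : ∀ x y : ℝ,
      exp (-x ^ 2 / ξ1 - y ^ 2 / ξ2) = exp (-ξ1⁻¹ * x ^ 2) * exp (-ξ2⁻¹ * y ^ 2) := by
    intro x y
    rw [← exp_add]
    ring_nf
  have hfirst := setIntegral_snd_le_fst_mul_exp_neg_mul_sq (inv_pos.2 hξ1) (inv_pos.2 hξ2)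
  have hsecond := setIntegral_snd_le_fst_mul_exp_neg_mul_sq (inv_pos.2 hξ2) (inv_pos.2 hξ1)
  rw [setIntegral_fst_le_snd_eq_swap]
  simp_rw [Prod.fst_swap, Prod.snd_swap, hsplit, mul_comm _ (_ : ℝ × ℝ).1, ← mul_assoc,
    mul_right_comm _ (exp (-ξ1⁻¹ * (_ : ℝ × ℝ).2 ^ 2)), hfirst, hsecond]
  have hroot : √(π / (ξ1⁻¹ + ξ2⁻¹)) = √π * √(ξ1 * ξ2) / √(ξ1 + ξ2) := by
    rw [← sqrt_mul pi_pos.le, ← sqrt_div' _ (by positivity : 0 ≤ ξ1 + ξ2)]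
    congr 1
    field_simp
    ring
  have hpow : π ^ ((3 : ℝ) / 2) = √π ^ 3 := by
    rw [rpow_div_two_eq_sqrt _ pi_pos.le]
    norm_cast
  have hpi : √π ^ 2 = π := sq_sqrt pi_pos.le
  have hsum : √(ξ1 + ξ2) ^ 2 = ξ1 + ξ2 := sq_sqrt (by positivity)
  rw [add_comm ξ2⁻¹, hroot, hpow]
  field_simp
  rw [hsum, show √π ^ 4 = (√π ^ 2) ^ 2 by ring, hpi]
  ring
end

section
/- There exists a constant C > 0 such that for every real σ with 1/2 < σ ≤ 1, | ∫_2^∞ u^{−2σ}/log u du − ( log(1/(σ − 1/2)) − log(2 log 2) − γ ) | ≤ C (σ − 1/2), where γ := ∫_0^1 (1 − e^{−w})/w dw − ∫_1^∞ e^{−w}/w dw is the Euler–Mascheroni constant. -/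
/-!
Substituting `w = (2σ - 1) log u` turns the integral into `∫_x^∞ e^{-w}/w dw` with
`x = 2 log 2 (σ - 1/2)`. Splitting at `1` and writing `e^{-w}/w = 1/w - (1 - e^{-w})/w` on
`(x, 1]` gives `-log x - γ + ∫_0^x (1 - e^{-w})/w dw`, and this last integrand lies in `[0, 1]`,
so the error is at most `x`.
-/

open MeasureTheory Set Real

lemma norm_one_sub_exp_neg_div_le_one {w : ℝ} (hw : 0 < w) :
    ‖(1 - exp (-w)) / w‖ ≤ 1 := by
  have hle : 1 - exp (-w) ≤ w := by linarith [add_one_le_exp (-w)]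
  have hnonneg : 0 ≤ 1 - exp (-w) := sub_nonneg.2 (exp_le_one_iff.2 (by linarith))
  rw [norm_of_nonneg (by positivity)]
  exact div_le_one_of_le₀ hle hw.le

lemma integrableOn_one_sub_exp_neg_div_Ioc (b : ℝ) :
    IntegrableOn (fun w : ℝ => (1 - exp (-w)) / w) (Ioc 0 b) := by
  refine Measure.integrableOn_of_bounded (M := 1) measure_Ioc_lt_top.ne ?_ ?_
  · exact (by fun_prop : Measurable fun w : ℝ => (1 - exp (-w)) / w).aestronglyMeasurable
  · filter_upwards [ae_restrict_mem measurableSet_Ioc] with w hw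
    exact norm_one_sub_exp_neg_div_le_one hw.1

lemma intervalIntegrable_one_sub_exp_neg_div {b : ℝ} (hb : 0 ≤ b) :
    IntervalIntegrable (fun w => (1 - exp (-w)) / w) volume 0 b :=
  (intervalIntegrable_iff_integrableOn_Ioc_of_le hb).2 (integrableOn_one_sub_exp_neg_div_Ioc b)

lemma abs_integral_one_sub_exp_neg_div_le {x : ℝ} (hx : 0 ≤ x) :
    |∫ w in Ioc 0 x, (1 - exp (-w)) / w| ≤ x := by
  have h := norm_setIntegral_le_of_norm_le_const (C := 1) (μ := volume) measure_Ioc_lt_top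
    fun w (hw : w ∈ Ioc 0 x) => norm_one_sub_exp_neg_div_le_one hw.1
  rwa [measureReal_def, volume_Ioc, ENNReal.toReal_ofReal (by linarith), one_mul, sub_zero,
    norm_eq_abs] at h

lemma integrableOn_exp_neg_div_Ioi {x : ℝ} (hx : 0 < x) :
    IntegrableOn (fun w => exp (-w) / w) (Ioi x) := by
  refine ((exp_neg_integrableOn_Ioi x one_pos).const_mul x⁻¹).mono' ?_ ?_
  · exact (by fun_prop : Measurable fun w : ℝ => exp (-w) / w).aestronglyMeasurable
  · filter_upwards [ae_restrict_mem measurableSet_Ioi] with w (hw : x < w)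
    rw [norm_of_nonneg (by have := hx.trans hw; positivity), neg_one_mul, mul_comm,
      ← div_eq_mul_inv]
    gcongr

lemma integral_Ioi_exp_neg_div {x : ℝ} (hx : 0 < x) :
    ∫ w in Ioi x, exp (-w) / w =
      -log x - ((∫ w in Ioc 0 1, (1 - exp (-w)) / w) - ∫ w in Ioi 1, exp (-w) / w)
        + ∫ w in Ioc 0 x, (1 - exp (-w)) / w := by
  have hpos : ∀ w ∈ uIcc x 1, 0 < w := fun w hw => (lt_min hx one_pos).trans_le hw.1
  have hf : IntervalIntegrable (fun w => exp (-w) / w) volume x 1 :=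
    (ContinuousOn.div (by fun_prop) continuousOn_id fun w hw =>
      (hpos w hw).ne').intervalIntegrable
  have hinv : IntervalIntegrable (fun w : ℝ => w⁻¹) volume x 1 :=
    intervalIntegral.intervalIntegrable_inv (fun w hw => (hpos w hw).ne') continuousOn_id
  have hg := intervalIntegrable_one_sub_exp_neg_div hx.le
  have hg' := hg.symm.trans (intervalIntegrable_one_sub_exp_neg_div zero_le_one)
  have hsplit_Ioi := intervalIntegral.integral_interval_add_Ioi' hf
    (integrableOn_exp_neg_div_Ioi one_pos)
  have hsplit_Ioc := intervalIntegral.integral_add_adjacent_intervals hg hg'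
  have hf_eq : ∫ w in x..1, exp (-w) / w =
      (∫ w in x..1, w⁻¹) - ∫ w in x..1, (1 - exp (-w)) / w := by
    rw [← intervalIntegral.integral_sub hinv hg']
    congr 1 with w
    ring
  rw [intervalIntegral.integral_of_le hx.le,
    intervalIntegral.integral_of_le zero_le_one] at hsplit_Ioc
  rw [← hsplit_Ioi, ← hsplit_Ioc, hf_eq, integral_inv_of_pos hx one_pos, one_div, log_inv]
  ring

lemma integral_Ioi_rpow_div_log {a δ : ℝ} (ha : 0 < a) (hδ : 0 < δ) :
    ∫ u in Ioi a, u ^ (-(1 + δ)) / log u = ∫ w in Ioi (δ * log a), exp (-w) / w := by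
  calc ∫ u in Ioi a, u ^ (-(1 + δ)) / log u
      = ∫ u in Ioi a, u⁻¹ • (δ * (exp (-(δ * log u)) / (δ * log u))) := by
        refine setIntegral_congr_fun measurableSet_Ioi fun u (hu : a < u) => ?_
        have hu0 : 0 < u := ha.trans hu
        -- `u ^ (-(1 + δ)) = u⁻¹ * exp (-(δ * log u))`
        rw [smul_eq_mul, ← mul_div_assoc, mul_div_mul_left _ _ hδ.ne', rpow_def_of_pos hu0,
          ← mul_div_assoc, show log u * -(1 + δ) = -log u + -(δ * log u) by ring, exp_add,
          exp_neg (log u), exp_log hu0]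
    _ = ∫ y in Ioi (log a), δ * (exp (-(δ * y)) / (δ * y)) :=
        integral_comp_log_Ioi (fun y => δ * (exp (-(δ * y)) / (δ * y))) ha
    _ = ∫ w in Ioi (δ * log a), exp (-w) / w := by
        rw [integral_const_mul]
        exact integral_comp_mul_left_Ioi' (fun w => exp (-w) / w) _ hδ

/-- There is `C > 0` such that for `1/2 < σ ≤ 1`,
`∫_2^∞ u^{−2σ}/log u du = log(1/(σ−1/2)) − log(2 log 2) − γ + O(σ − 1/2)`,
where `γ` is the Euler–Mascheroni constant, given by
`γ = ∫_0^1 (1 − e^{−w})/w dw − ∫_1^∞ e^{−w}/w dw`. -/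
theorem stmt_2 :
    ∃ C : ℝ, 0 < C ∧ ∀ σ : ℝ, 1 / 2 < σ → σ ≤ 1 →
      |(∫ u in Set.Ioi (2 : ℝ), u ^ (-(2 * σ)) / Real.log u) -
          (Real.log (1 / (σ - 1 / 2)) - Real.log (2 * Real.log 2) -
            ((∫ w in Set.Ioc (0 : ℝ) 1, (1 - Real.exp (-w)) / w) -
              ∫ w in Set.Ioi (1 : ℝ), Real.exp (-w) / w))| ≤ C * (σ - 1 / 2) := by
  refine ⟨2 * log 2, by positivity, fun σ hσ _ => ?_⟩
  have hδ : 0 < 2 * σ - 1 := by linarith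
  have hsubst := integral_Ioi_rpow_div_log two_pos hδ
  rw [show 1 + (2 * σ - 1) = 2 * σ by ring] at hsubst
  set x := (2 * σ - 1) * log 2
  have hx : 0 < x := by positivity
  have hlog_x : log (1 / (σ - 1 / 2)) - log (2 * log 2) = -log x := by
    have h2log2 : 0 < 2 * log 2 := by positivity
    rw [show x = 2 * log 2 * (σ - 1 / 2) by ring, log_mul h2log2.ne' (by linarith), one_div,
      log_inv]
    ring
  rw [hsubst, integral_Ioi_exp_neg_div hx]
  calc _ = |∫ w in Ioc 0 x, (1 - exp (-w)) / w| := by congr 1; linarith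
    _ ≤ x := abs_integral_one_sub_exp_neg_div_le hx.le
    _ = 2 * log 2 * (σ - 1 / 2) := by ring
end

section
/- The following three series converge: ∑_p ∑_{k ≥ 3} |β(p^k)| / p^{k/2} < ∞, ∑_p ∑_{k ≥ 2} |β(p^k)|² / p^{k} < ∞, and ∑_p |β(p)|⁴ / p² < ∞, where p runs over all primes. -/
/-!
With `A(p) = ∑ᵢ |αᵢ(p)|²`, partial summation turns the averaged Ramanujan bound into convergence
of `∑_p A(p) / p^s` for every `s > 1`. The pointwise bound `|αᵢ(p)| ≤ p^θ` gives
`|β(p^k)| ≤ A(p) p^{θ(k-2)}` and `A(p) ≤ d p^{2θ}`, so for each prime the sums over `k` are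
geometric with ratio at most `2^{θ-1/2}` (resp. `2^{2θ-1}`) and are dominated by their first
terms, which are at most `A(p) / p^{3/2-θ}` and `d A(p) / p^{2-2θ}`; likewise
`|β(p)|⁴ / p² ≤ d³ A(p) / p^{2-2θ}`. Since `θ < 1/2`, all exponents exceed `1`.
-/

open Finset

/-- `β(p^n) := (1/n) ∑_{i=1}^d α_i(p)^n`. -/
noncomputable def betaFn (d : ℕ) (α : ℕ → Fin d → ℂ) (p n : ℕ) : ℂ :=
  (n : ℂ)⁻¹ * ∑ i, (α p i) ^ n

open Filter Asymptotics

section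
variable {ι : Type*} [Fintype ι] {x : ι → ℂ} {t : ℝ}

theorem norm_inv_mul_sum_pow_le (hx : ∀ i, ‖x i‖ ≤ t) {k : ℕ} (hk : 2 ≤ k) :
    ‖(k : ℂ)⁻¹ * ∑ i, x i ^ k‖ ≤ (∑ i, ‖x i‖ ^ 2) * t ^ (k - 2) := by
  have hk1 : ‖(k : ℂ)⁻¹‖ ≤ 1 := by
    rw [norm_inv, Complex.norm_natCast]
    exact inv_le_one_of_one_le₀ (by exact_mod_cast (by omega : 1 ≤ k))
  calc ‖(k : ℂ)⁻¹ * ∑ i, x i ^ k‖ ≤ ∑ i, ‖x i‖ ^ k := by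
        rw [norm_mul]
        refine (mul_le_of_le_one_left (norm_nonneg _) hk1).trans ?_
        simpa only [norm_pow] using norm_sum_le univ fun i ↦ x i ^ k
    _ = ∑ i, ‖x i‖ ^ 2 * ‖x i‖ ^ (k - 2) := by
        simp_rw [← pow_add, Nat.add_sub_cancel' hk]
    _ ≤ ∑ i, ‖x i‖ ^ 2 * t ^ (k - 2) := by gcongr with i; exact hx i
    _ = (∑ i, ‖x i‖ ^ 2) * t ^ (k - 2) := (sum_mul ..).symm

theorem sum_norm_sq_le_card_mul (hx : ∀ i, ‖x i‖ ≤ t) :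
    ∑ i, ‖x i‖ ^ 2 ≤ Fintype.card ι * t ^ 2 := by
  calc ∑ i, ‖x i‖ ^ 2 ≤ ∑ _i : ι, t ^ 2 := by gcongr with i; exact hx i
    _ = Fintype.card ι * t ^ 2 := by simp

theorem norm_sum_pow_four_le (hx : ∀ i, ‖x i‖ ≤ t) :
    ‖∑ i, x i‖ ^ 4 ≤ Fintype.card ι ^ 3 * t ^ 2 * ∑ i, ‖x i‖ ^ 2 := by
  have hcs : ‖∑ i, x i‖ ^ 2 ≤ Fintype.card ι * ∑ i, ‖x i‖ ^ 2 :=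
    calc ‖∑ i, x i‖ ^ 2 ≤ (∑ i, ‖x i‖) ^ 2 := by gcongr; exact norm_sum_le _ _
      _ ≤ Fintype.card ι * ∑ i, ‖x i‖ ^ 2 := by
        simpa using sq_sum_le_card_mul_sum_sq (s := univ) (f := fun i ↦ ‖x i‖)
  calc ‖∑ i, x i‖ ^ 4 = (‖∑ i, x i‖ ^ 2) ^ 2 := by ring
    _ ≤ (Fintype.card ι * ∑ i, ‖x i‖ ^ 2) ^ 2 := by gcongr
    _ = Fintype.card ι ^ 2 * (∑ i, ‖x i‖ ^ 2) * ∑ i, ‖x i‖ ^ 2 := by ring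
    _ ≤ Fintype.card ι ^ 2 * (Fintype.card ι * t ^ 2) * ∑ i, ‖x i‖ ^ 2 := by
        gcongr; exact sum_norm_sq_le_card_mul hx
    _ = Fintype.card ι ^ 3 * t ^ 2 * ∑ i, ‖x i‖ ^ 2 := by ring

end

theorem summable_div_rpow_of_sum_Icc_isBigO {f : ℕ → ℝ} (hf : ∀ n, 0 ≤ f n) {r s : ℝ}
    (hO : (fun n ↦ ∑ k ∈ Icc 1 n, f k) =O[atTop] fun n ↦ (n : ℝ) ^ r) (hr : 0 ≤ r)
    (hs : r < s) :
    Summable fun n ↦ f n / (n : ℝ) ^ s := by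
  have h := LSeriesSummable_of_sum_norm_bigO_and_nonneg hO hf hr (s := s) (by simpa)
  rw [LSeriesSummable, ← summable_norm_iff] at h
  refine h.congr fun n ↦ ?_
  rcases eq_or_ne n 0 with rfl | hn
  · simp [Real.zero_rpow (by linarith : s ≠ 0)]
  · simp [hn, abs_of_nonneg (hf n)]

theorem summable_prime_div_rpow_of_sum_le {f : ℕ → ℝ} (hf : ∀ n, 0 ≤ f n) {C σ s : ℝ}
    (hσ : 0 ≤ σ) (hs : σ < s)
    (hbound : ∀ x : ℝ, 2 ≤ x →
      ∑ p ∈ (range (⌊x⌋₊ + 1)).filter Nat.Prime, f p ≤ C * x ^ σ) :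
    Summable fun p ↦ if p.Prime then f p / (p : ℝ) ^ s else 0 := by
  set g : ℕ → ℝ := fun n ↦ if n.Prime then f n else 0
  have hg : ∀ n, 0 ≤ g n := fun n ↦ by unfold g; split_ifs; exacts [hf n, le_rfl]
  have hO : (fun n ↦ ∑ k ∈ Icc 1 n, g k) =O[atTop] fun n ↦ (n : ℝ) ^ σ := by
    refine IsBigO.of_bound C ?_
    filter_upwards [eventually_ge_atTop 2] with n hn
    rw [Real.norm_of_nonneg (sum_nonneg fun k _ ↦ hg k),
      Real.norm_of_nonneg (Real.rpow_nonneg n.cast_nonneg σ)]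
    calc ∑ k ∈ Icc 1 n, g k ≤ ∑ k ∈ range (n + 1), g k :=
          sum_le_sum_of_subset_of_nonneg (fun k hk ↦ by simp at hk ⊢; omega) fun k _ _ ↦ hg k
      _ = ∑ p ∈ (range (⌊(n : ℝ)⌋₊ + 1)).filter Nat.Prime, f p := by
          rw [Nat.floor_natCast, sum_filter]
      _ ≤ C * (n : ℝ) ^ σ := hbound n (by exact_mod_cast hn)
  refine (summable_div_rpow_of_sum_Icc_isBigO hg hO hσ hs).congr fun p ↦ ?_
  simp only [g, ite_div, zero_div]

theorem summable_ite_of_le {β : Type*} {P : β → Prop} [DecidablePred P] {f g : β → ℝ}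
    (hg : Summable fun b ↦ if P b then g b else 0) (hf : ∀ b, P b → 0 ≤ f b)
    (hfg : ∀ b, P b → f b ≤ g b) : Summable fun b ↦ if P b then f b else 0 :=
  hg.of_nonneg_of_le (fun b ↦ by split_ifs with h; exacts [hf b h, le_rfl])
    (fun b ↦ by split_ifs with h; exacts [hfg b h, le_rfl])

theorem summable_prod_ite_mul_pow {ι : Type*} (P : ι → Prop) [DecidablePred P] {B r : ι → ℝ}
    {ρ : ℝ} (hB : ∀ i, P i → 0 ≤ B i) (hr : ∀ i, P i → 0 ≤ r i ∧ r i ≤ ρ) (hρ0 : 0 ≤ ρ)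
    (hρ1 : ρ < 1) (m : ℕ) (h : Summable fun i ↦ if P i then B i * r i ^ m else 0) :
    Summable fun q : ι × ℕ ↦ if P q.1 ∧ m ≤ q.2 then B q.1 * r q.1 ^ q.2 else 0 := by
  have hBr (i : ι) (hi : P i) (k : ℕ) : 0 ≤ B i * r i ^ k :=
    mul_nonneg (hB i hi) (pow_nonneg (hr i hi).1 k)
  have hf0 (i : ι) : 0 ≤ if P i then B i * r i ^ m else 0 := by
    split_ifs with hi; exacts [hBr i hi m, le_rfl]
  have hg0 (k : ℕ) : 0 ≤ if m ≤ k then ρ ^ (k - m) else 0 := by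
    split_ifs <;> positivity
  have hgeom : Summable fun k : ℕ ↦ if m ≤ k then ρ ^ (k - m) else 0 :=
    (summable_nat_add_iff m).mp ((summable_geometric_of_lt_one hρ0 hρ1).congr fun k ↦ by simp)
  refine (h.mul_of_nonneg hgeom hf0 hg0).of_nonneg_of_le (fun q ↦ ?_) fun ⟨i, k⟩ ↦ ?_
  · split_ifs with hq; exacts [hBr _ hq.1 _, le_rfl]
  · by_cases hq : P i ∧ m ≤ k
    · obtain ⟨hi, hk⟩ := hq
      simp only [hi, hk, and_self, if_true]
      calc B i * r i ^ k = B i * r i ^ m * r i ^ (k - m) := by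
            rw [mul_assoc, ← pow_add, Nat.add_sub_cancel' hk]
        _ ≤ B i * r i ^ m * ρ ^ (k - m) := by
            gcongr
            exacts [hBr i hi m, (hr i hi).1, (hr i hi).2]
    · simpa only [hq, if_false] using mul_nonneg (hf0 i) (hg0 k)

theorem Real.rpow_mul_rpow_pow {x : ℝ} (hx : 0 < x) (a b : ℝ) (k : ℕ) :
    x ^ a * (x ^ b) ^ k = x ^ (a + b * k) := by
  rw [← Real.rpow_mul_natCast hx.le, ← Real.rpow_add hx]

theorem summable_prime_prod_mul_rpow {f : ℕ → ℝ} (hf : ∀ p, 0 ≤ f p) {b s : ℝ} (hb : b < 0)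
    (m : ℕ) (h : Summable fun p ↦ if p.Prime then f p / (p : ℝ) ^ s else 0) :
    Summable fun q : ℕ × ℕ ↦
      if q.1.Prime ∧ m ≤ q.2 then f q.1 * (q.1 : ℝ) ^ (b * ((q.2 : ℝ) - m) - s) else 0 := by
  have hp0 (p : ℕ) (hp : p.Prime) : (0 : ℝ) < p := Nat.cast_pos.mpr hp.pos
  have hterm (p : ℕ) (hp : p.Prime) (k : ℕ) :
      f p * (p : ℝ) ^ (-s - b * m) * ((p : ℝ) ^ b) ^ k =
        f p * (p : ℝ) ^ (b * ((k : ℝ) - m) - s) := by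
    rw [mul_assoc, Real.rpow_mul_rpow_pow (hp0 p hp)]
    ring_nf
  have hfirst : Summable fun p ↦
      if p.Prime then f p * (p : ℝ) ^ (-s - b * m) * ((p : ℝ) ^ b) ^ m else 0 :=
    h.congr fun p ↦ by
      split_ifs with hp
      · rw [hterm p hp, sub_self, mul_zero, zero_sub, Real.rpow_neg (hp0 p hp).le,
          div_eq_mul_inv]
      · rfl
  refine (summable_prod_ite_mul_pow Nat.Prime
    (fun p hp ↦ mul_nonneg (hf p) (Real.rpow_nonneg (hp0 p hp).le _))
    (fun p hp ↦ ⟨Real.rpow_nonneg (hp0 p hp).le _,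
      Real.rpow_le_rpow_of_nonpos two_pos (Nat.ofNat_le_cast.mpr hp.two_le) hb.le⟩)
    (Real.rpow_nonneg zero_le_two b) (Real.rpow_lt_one_of_one_lt_of_neg one_lt_two hb) m
    hfirst).congr fun q ↦ ?_
  split_ifs with hq
  exacts [hterm q.1 hq.1 q.2, rfl]

noncomputable def normSqSum {d : ℕ} (α : ℕ → Fin d → ℂ) (p : ℕ) : ℝ :=
  ∑ i, ‖α p i‖ ^ 2

section
variable {d : ℕ} {α : ℕ → Fin d → ℂ} {θ : ℝ} {p k : ℕ}

theorem normSqSum_nonneg : 0 ≤ normSqSum α p := by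
  unfold normSqSum; positivity

theorem norm_betaFn_le (hα : ∀ i, ‖α p i‖ ≤ (p : ℝ) ^ θ) (hk : 2 ≤ k) :
    ‖betaFn d α p k‖ ≤ normSqSum α p * (p : ℝ) ^ (θ * ((k : ℝ) - 2)) := by
  refine (norm_inv_mul_sum_pow_le hα hk).trans_eq ?_
  rw [normSqSum, ← Real.rpow_mul_natCast (Nat.cast_nonneg p), Nat.cast_sub hk, Nat.cast_ofNat]

-- The exponents are written in the shape `b * (k - m) - s` of `summable_prime_prod_mul_rpow`.
theorem norm_betaFn_div_rpow_le (hp : 0 < p) (hα : ∀ i, ‖α p i‖ ≤ (p : ℝ) ^ θ)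
    (hk : 2 ≤ k) :
    ‖betaFn d α p k‖ / (p : ℝ) ^ ((k : ℝ) / 2) ≤
      normSqSum α p * (p : ℝ) ^ ((θ - 1 / 2) * ((k : ℝ) - 3) - (3 / 2 - θ)) := by
  have hp' : (0 : ℝ) < p := Nat.cast_pos.mpr hp
  calc ‖betaFn d α p k‖ / (p : ℝ) ^ ((k : ℝ) / 2)
      ≤ normSqSum α p * (p : ℝ) ^ (θ * ((k : ℝ) - 2)) / (p : ℝ) ^ ((k : ℝ) / 2) := by
        gcongr; exact norm_betaFn_le hα hk
    _ = _ := by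
        rw [mul_div_assoc, ← Real.rpow_sub hp']
        ring_nf

theorem norm_betaFn_sq_div_pow_le (hp : 0 < p) (hα : ∀ i, ‖α p i‖ ≤ (p : ℝ) ^ θ)
    (hk : 2 ≤ k) :
    ‖betaFn d α p k‖ ^ 2 / (p : ℝ) ^ k ≤
      d * normSqSum α p * (p : ℝ) ^ ((2 * θ - 1) * ((k : ℝ) - 2) - (2 - 2 * θ)) := by
  have hp' : (0 : ℝ) < p := Nat.cast_pos.mpr hp
  have hA : normSqSum α p ≤ d * (p : ℝ) ^ (2 * θ) := by
    have h := sum_norm_sq_le_card_mul hα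
    rwa [Fintype.card_fin, ← Real.rpow_mul_natCast hp'.le, Nat.cast_ofNat, mul_comm θ] at h
  calc ‖betaFn d α p k‖ ^ 2 / (p : ℝ) ^ k
      ≤ (normSqSum α p * (p : ℝ) ^ (θ * ((k : ℝ) - 2))) ^ 2 / (p : ℝ) ^ k := by
        gcongr; exact norm_betaFn_le hα hk
    _ = normSqSum α p * normSqSum α p * (p : ℝ) ^ (2 * θ * ((k : ℝ) - 2) - k) := by
        rw [mul_pow, ← Real.rpow_mul_natCast hp'.le, ← Real.rpow_natCast (p : ℝ) k,
          mul_div_assoc, ← Real.rpow_sub hp']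
        ring_nf
    _ ≤ d * (p : ℝ) ^ (2 * θ) * normSqSum α p * (p : ℝ) ^ (2 * θ * ((k : ℝ) - 2) - k) := by
        gcongr; exact normSqSum_nonneg
    _ = _ := by
        rw [mul_right_comm _ _ (normSqSum α p), mul_assoc _ ((p : ℝ) ^ _),
          ← Real.rpow_add hp']
        ring_nf

theorem norm_betaFn_one_pow_four_div_le (hp : 0 < p) (hα : ∀ i, ‖α p i‖ ≤ (p : ℝ) ^ θ) :
    ‖betaFn d α p 1‖ ^ 4 / (p : ℝ) ^ 2 ≤ d ^ 3 * (normSqSum α p / (p : ℝ) ^ (2 - 2 * θ)) := by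
  have hp' : (0 : ℝ) < p := Nat.cast_pos.mpr hp
  have h := norm_sum_pow_four_le hα
  rw [Fintype.card_fin] at h
  calc ‖betaFn d α p 1‖ ^ 4 / (p : ℝ) ^ 2
      ≤ d ^ 3 * ((p : ℝ) ^ θ) ^ 2 * normSqSum α p / (p : ℝ) ^ 2 := by
        gcongr; simpa [betaFn, normSqSum] using h
    _ = _ := by
        rw [Real.rpow_sub hp', Real.rpow_two, show 2 * θ = θ * (2 : ℕ) by push_cast; ring,
          Real.rpow_mul_natCast hp'.le]
        field_simp

end

theorem stmt_6_general (d : ℕ) (θ : ℝ) (hθ : θ < 1 / 2)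
    (α : ℕ → Fin d → ℂ)
    (hα : ∀ p : ℕ, p.Prime → ∀ i, ‖α p i‖ ≤ (p : ℝ) ^ θ)
    (hram : ∀ ε : ℝ, 0 < ε → ∃ Cε : ℝ, 0 < Cε ∧ ∀ x : ℝ, 2 ≤ x →
      ∑ p ∈ (Finset.range (⌊x⌋₊ + 1)).filter Nat.Prime,
          ∑ i, ‖α p i‖ ^ 2 ≤ Cε * x ^ (1 + ε)) :
    Summable (fun q : ℕ × ℕ =>
      if q.1.Prime ∧ 3 ≤ q.2 then
        ‖betaFn d α q.1 q.2‖ / (q.1 : ℝ) ^ ((q.2 : ℝ) / 2)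
      else 0) ∧
    Summable (fun q : ℕ × ℕ =>
      if q.1.Prime ∧ 2 ≤ q.2 then
        ‖betaFn d α q.1 q.2‖ ^ 2 / (q.1 : ℝ) ^ (q.2 : ℕ)
      else 0) ∧
    Summable (fun p : ℕ =>
      if p.Prime then ‖betaFn d α p 1‖ ^ 4 / (p : ℝ) ^ 2 else 0) := by
  have hA (s : ℝ) (hs : 1 < s) :
      Summable fun p ↦ if p.Prime then normSqSum α p / (p : ℝ) ^ s else 0 := by
    obtain ⟨C, -, hC⟩ := hram ((s - 1) / 2) (by linarith)
    exact summable_prime_div_rpow_of_sum_le (fun _ ↦ normSqSum_nonneg) (by linarith)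
      (by linarith) hC
  refine ⟨?_, ?_, ?_⟩
  · refine summable_ite_of_le (summable_prime_prod_mul_rpow (fun _ ↦ normSqSum_nonneg)
      (b := θ - 1 / 2) (by linarith) 3 (hA (3 / 2 - θ) (by linarith)))
      (fun _ _ ↦ by positivity) fun q hq ↦ ?_
    simpa using norm_betaFn_div_rpow_le hq.1.pos (hα _ hq.1) (by omega : 2 ≤ q.2)
  · have hdA : Summable fun p ↦
        if p.Prime then d * normSqSum α p / (p : ℝ) ^ (2 - 2 * θ) else 0 := by
      simpa only [mul_ite, mul_zero, mul_div_assoc]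
        using (hA (2 - 2 * θ) (by linarith)).mul_left (d : ℝ)
    refine summable_ite_of_le (summable_prime_prod_mul_rpow
      (fun _ ↦ mul_nonneg d.cast_nonneg normSqSum_nonneg)
      (b := 2 * θ - 1) (by linarith) 2 hdA) (fun _ _ ↦ by positivity) fun q hq ↦ ?_
    simpa using norm_betaFn_sq_div_pow_le hq.1.pos (hα _ hq.1) hq.2
  · refine summable_ite_of_le ?_ (fun _ _ ↦ by positivity)
      fun p hp ↦ norm_betaFn_one_pow_four_div_le hp.pos (hα p hp)
    simpa only [mul_ite, mul_zero] using (hA (2 - 2 * θ) (by linarith)).mul_left ((d : ℝ) ^ 3)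

/-- Under the local bound `|α_i(p)| ≤ p^θ` and the Ramanujan hypothesis on average, the
series `∑_p ∑_{k ≥ 3} |β(p^k)|/p^{k/2}`, `∑_p ∑_{k ≥ 2} |β(p^k)|²/p^k` and
`∑_p |β(p)|⁴/p²` converge. -/
theorem stmt_6 (d : ℕ) (hd : 1 ≤ d) (θ : ℝ) (hθ0 : 0 ≤ θ) (hθ : θ < 1 / 2)
    (α : ℕ → Fin d → ℂ)
    (hα : ∀ p : ℕ, p.Prime → ∀ i, ‖α p i‖ ≤ (p : ℝ) ^ θ)
    (hram : ∀ ε : ℝ, 0 < ε → ∃ Cε : ℝ, 0 < Cε ∧ ∀ x : ℝ, 2 ≤ x →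
      ∑ p ∈ (Finset.range (⌊x⌋₊ + 1)).filter Nat.Prime,
          ∑ i, ‖α p i‖ ^ 2 ≤ Cε * x ^ (1 + ε)) :
    Summable (fun q : ℕ × ℕ =>
      if q.1.Prime ∧ 3 ≤ q.2 then
        ‖betaFn d α q.1 q.2‖ / (q.1 : ℝ) ^ ((q.2 : ℝ) / 2)
      else 0) ∧
    Summable (fun q : ℕ × ℕ =>
      if q.1.Prime ∧ 2 ≤ q.2 then
        ‖betaFn d α q.1 q.2‖ ^ 2 / (q.1 : ℝ) ^ (q.2 : ℕ)
      else 0) ∧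
    Summable (fun p : ℕ =>
      if p.Prime then ‖betaFn d α p 1‖ ^ 4 / (p : ℝ) ^ 2 else 0) :=
  stmt_6_general d θ hθ α hα hram
end

section
/- For every real z ≥ 2, every complex-valued function a on the primes, and every integer k ≥ 1, 𝔼[ | ∑_{p ≤ z} a(p) X_p |^{2k} ] ≤ k! · ( ∑_{p ≤ z} |a(p)|² )^{k}, where the sums run over primes p ≤ z. -/
open Finset MeasureTheory ProbabilityTheory

noncomputable def circleUniform : Measure ℂ :=
  Measure.map (fun t : ℝ => Complex.exp (t * Complex.I))
    ((ENNReal.ofReal (2 * Real.pi))⁻¹ • volume.restrict (Set.Ioc 0 (2 * Real.pi)))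

/-!
Write `S = ∑ a_p X_p` and expand `|S|^{2k} = S^k · conj S^k` over pairs of `k`-tuples `f, g` of
primes. By independence and the circle moments `𝔼[X^m conj X^n] = δ_{mn}`, the pair `(f, g)`
contributes `∏ a_{f j} · conj (∏ a_{g j})` if every prime occurs equally often in `f` and `g`,
and `0` otherwise. In the first case `g` is a rearrangement of `f`, so the contribution is
`|∏ a_{f j}|²`, and each `f` has at most `k!` rearrangements. Summing over `f` gives
`k! · ∑_f |∏ a_{f j}|² = k! · (∑ |a_p|²)^k`.
-/

open ComplexConjugate Nat

instance isProbabilityMeasure_circleUniform : IsProbabilityMeasure circleUniform := by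
  have h2π : ENNReal.ofReal (2 * Real.pi) ≠ 0 := by simp [Real.pi_pos]
  have : IsProbabilityMeasure
      ((ENNReal.ofReal (2 * Real.pi))⁻¹ • volume.restrict (Set.Ioc 0 (2 * Real.pi))) :=
    ⟨by
      rw [Measure.smul_apply, Measure.restrict_apply_univ, Real.volume_Ioc, sub_zero, smul_eq_mul,
        ENNReal.inv_mul_cancel h2π ENNReal.ofReal_ne_top]⟩
  exact Measure.isProbabilityMeasure_map (by fun_prop)

lemma ae_norm_eq_one_circleUniform : ∀ᵐ w ∂circleUniform, ‖w‖ = 1 := by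
  rw [circleUniform, ae_map_iff (by fun_prop) (measurableSet_eq_fun (by fun_prop) (by fun_prop))]
  exact ae_of_all _ fun t => by simp [Complex.norm_exp]

lemma integral_circleUniform_pow_mul_conj_pow (m n : ℕ) :
    ∫ w, w ^ m * conj w ^ n ∂circleUniform = if m = n then 1 else 0 := by
  split_ifs with hmn
  · subst hmn
    calc ∫ w, w ^ m * conj w ^ m ∂circleUniform = ∫ _, (1 : ℂ) ∂circleUniform := by
          refine integral_congr_ae (ae_norm_eq_one_circleUniform.mono fun w hw => ?_)
          simp [← mul_pow, Complex.mul_conj', hw]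
      _ = 1 := by simp
  have hc : ((m : ℂ) - n) * Complex.I ≠ 0 :=
    mul_ne_zero (sub_ne_zero.2 (Nat.cast_injective.ne hmn)) Complex.I_ne_zero
  have hexp (t : ℝ) : Complex.exp (t * Complex.I) ^ m * conj (Complex.exp (t * Complex.I)) ^ n =
      Complex.exp (((m : ℂ) - n) * Complex.I * t) := by
    rw [← Complex.exp_conj, ← Complex.exp_nat_mul, ← Complex.exp_nat_mul, ← Complex.exp_add]
    simp only [map_mul, Complex.conj_ofReal, Complex.conj_I]
    ring_nf
  have hperiod : Complex.exp (((m : ℂ) - n) * Complex.I * ↑(2 * Real.pi)) = 1 := by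
    rw [← Complex.exp_int_mul_two_pi_mul_I ((m : ℤ) - n)]
    push_cast
    ring_nf
  rw [circleUniform, integral_map (by fun_prop) (by fun_prop), integral_smul_measure]
  simp_rw [hexp]
  rw [← intervalIntegral.integral_of_le (by positivity), integral_exp_mul_complex hc, hperiod]
  simp

lemma prod_comp_eq_prod_pow_card_fiber {α ι M : Type*} [Fintype α] [Fintype ι] [DecidableEq ι]
    [CommMonoid M] (f : α → ι) (v : ι → M) :
    ∏ j, v (f j) = ∏ i, v i ^ Fintype.card {j // f j = i} := by
  simp [← Fintype.prod_fiberwise' f v]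

lemma card_filter_card_fiber_eq_le_factorial {α ι : Type*} [Fintype α] [DecidableEq α]
    [Fintype ι] [DecidableEq ι] (f : α → ι) :
    #{g : α → ι | ∀ i, Fintype.card {j // f j = i} = Fintype.card {j // g j = i}} ≤
      (Fintype.card α)! := by
  calc _ ≤ #(univ.image fun σ : Equiv.Perm α => f ∘ σ) := by
        refine card_le_card fun g hg => ?_
        have hfib := (mem_filter.1 hg).2
        let σ : α ≃ α := Equiv.ofFiberEquiv fun i => Fintype.equivOfCardEq (hfib i).symm
        exact mem_image.2 ⟨σ, mem_univ _, funext (Equiv.ofFiberEquiv_map _)⟩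
    _ ≤ _ := card_image_le.trans (by simp [Fintype.card_perm])

section CircleUniformLaw

variable {Ω : Type*} [MeasurableSpace Ω] {μ : Measure Ω} {Y : Ω → ℂ}

lemma aemeasurable_of_map_eq_circleUniform (hY : μ.map Y = circleUniform) : AEMeasurable Y μ :=
  AEMeasurable.of_map_ne_zero (hY ▸ IsProbabilityMeasure.ne_zero _)

lemma ae_norm_eq_one_of_map_eq_circleUniform (hY : μ.map Y = circleUniform) :
    ∀ᵐ ω ∂μ, ‖Y ω‖ = 1 :=
  ae_of_ae_map (aemeasurable_of_map_eq_circleUniform hY) (hY ▸ ae_norm_eq_one_circleUniform)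

lemma integral_pow_mul_conj_pow_of_map_eq_circleUniform (hY : μ.map Y = circleUniform)
    (m n : ℕ) : ∫ ω, Y ω ^ m * conj (Y ω) ^ n ∂μ = if m = n then 1 else 0 := by
  rw [← integral_circleUniform_pow_mul_conj_pow, ← hY,
    integral_map (aemeasurable_of_map_eq_circleUniform hY) (by fun_prop)]

end CircleUniformLaw

section IndependentCircleUniform

variable {Ω ι : Type*} [MeasurableSpace Ω] {μ : Measure Ω} [Fintype ι] {X : ι → Ω → ℂ}

lemma integral_prod_mul_conj_prod [DecidableEq ι] {α β : Type*} [Fintype α] [Fintype β]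
    (hindep : iIndepFun X μ) (hX : ∀ i, μ.map (X i) = circleUniform) (f : α → ι) (g : β → ι) :
    ∫ ω, (∏ j, X (f j) ω) * conj (∏ j, X (g j) ω) ∂μ =
      if ∀ i, Fintype.card {j // f j = i} = Fintype.card {j // g j = i} then 1 else 0 := by
  have hfactor ω : (∏ j, X (f j) ω) * conj (∏ j, X (g j) ω) =
      ∏ i, X i ω ^ Fintype.card {j // f j = i} * conj (X i ω) ^ Fintype.card {j // g j = i} := by
    rw [map_prod, prod_comp_eq_prod_pow_card_fiber f fun i => X i ω,
      prod_comp_eq_prod_pow_card_fiber g fun i => conj (X i ω), ← prod_mul_distrib]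
  simp_rw [hfactor]
  rw [hindep.integral_fun_prod_comp (f := fun i w => w ^ Fintype.card {j // f j = i} *
    conj w ^ Fintype.card {j // g j = i}) (fun i => aemeasurable_of_map_eq_circleUniform (hX i))
    (fun i => by fun_prop)]
  simp_rw [integral_pow_mul_conj_pow_of_map_eq_circleUniform (hX _)]
  exact Fintype.prod_boole

lemma integrable_prod_mul_conj_prod [IsProbabilityMeasure μ] {α β : Type*} [Fintype α]
    [Fintype β] (hX : ∀ i, μ.map (X i) = circleUniform) (f : α → ι) (g : β → ι) :
    Integrable (fun ω => (∏ j, X (f j) ω) * conj (∏ j, X (g j) ω)) μ := by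
  have hmeas i := aemeasurable_of_map_eq_circleUniform (hX i)
  refine (integrable_const 1).mono' (by fun_prop) ?_
  filter_upwards [ae_all_iff.2 fun i => ae_norm_eq_one_of_map_eq_circleUniform (hX i)] with ω hω
  simp [norm_prod, hω]

theorem integral_norm_sum_mul_pow [IsProbabilityMeasure μ] [DecidableEq ι]
    (hindep : iIndepFun X μ) (hX : ∀ i, μ.map (X i) = circleUniform) (a : ι → ℂ) (k : ℕ) :
    ∫ ω, ‖∑ i, a i * X i ω‖ ^ (2 * k) ∂μ =
      ∑ f : Fin k → ι,
        #{g : Fin k → ι | ∀ i, Fintype.card {j // f j = i} = Fintype.card {j // g j = i}} *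
          ‖∏ j, a (f j)‖ ^ 2 := by
  have hexpand ω : ((‖∑ i, a i * X i ω‖ ^ (2 * k) : ℝ) : ℂ) =
      ∑ f : Fin k → ι, ∑ g : Fin k → ι, (∏ j, a (f j)) * conj (∏ j, a (g j)) *
        ((∏ j, X (f j) ω) * conj (∏ j, X (g j) ω)) := by
    rw [pow_mul', ← norm_pow, Complex.ofReal_pow, ← Complex.mul_conj', Fintype.sum_pow, map_sum,
      sum_mul_sum]
    refine sum_congr rfl fun f _ => sum_congr rfl fun g _ => ?_
    simp only [prod_mul_distrib, map_mul]
    ring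
  have hcoeff (f g : Fin k → ι)
      (hfg : ∀ i, Fintype.card {j // f j = i} = Fintype.card {j // g j = i}) :
      ∏ j, a (g j) = ∏ j, a (f j) := by
    simp only [prod_comp_eq_prod_pow_card_fiber _ a, hfg]
  have hint (f g : Fin k → ι) := (integrable_prod_mul_conj_prod hX f g).const_mul
    ((∏ j, a (f j)) * conj (∏ j, a (g j)))
  apply Complex.ofReal_injective
  rw [← integral_complex_ofReal]
  simp_rw [hexpand]
  rw [integral_finsetSum _ fun f _ => integrable_finsetSum _ fun g _ => hint f g]
  push_cast
  refine sum_congr rfl fun f _ => ?_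
  rw [integral_finsetSum _ fun g _ => hint f g]
  simp_rw [integral_const_mul, integral_prod_mul_conj_prod hindep hX, mul_ite, mul_one, mul_zero,
    ← sum_filter]
  rw [sum_congr rfl fun g hg => by rw [hcoeff f g (mem_filter.1 hg).2, Complex.mul_conj'],
    sum_const, nsmul_eq_mul]

theorem integral_norm_sum_mul_pow_le [IsProbabilityMeasure μ] [DecidableEq ι]
    (hindep : iIndepFun X μ) (hX : ∀ i, μ.map (X i) = circleUniform) (a : ι → ℂ) (k : ℕ) :
    ∫ ω, ‖∑ i, a i * X i ω‖ ^ (2 * k) ∂μ ≤ k ! * (∑ i, ‖a i‖ ^ 2) ^ k := by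
  rw [integral_norm_sum_mul_pow hindep hX, Fintype.sum_pow, mul_sum]
  gcongr with f
  · simpa using card_filter_card_fiber_eq_le_factorial f
  · rw [norm_prod, prod_pow]

end IndependentCircleUniform

theorem stmt_8_general {Ω : Type*} [MeasurableSpace Ω] (μ : Measure Ω) [IsProbabilityMeasure μ]
    (X : ℕ → Ω → ℂ)
    (hXindep : iIndepFun
      (fun p : {p : ℕ // p.Prime} => X p) μ)
    (hXunif : ∀ p : ℕ, p.Prime → μ.map (X p) = circleUniform)
    (z : ℝ) (a : ℕ → ℂ) (k : ℕ) :
    (∫ ω, ‖∑ p ∈ (Finset.range (⌊z⌋₊ + 1)).filter Nat.Prime, a p * X p ω‖ ^ (2 * k) ∂μ) ≤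
      (k.factorial : ℝ) *
        (∑ p ∈ (Finset.range (⌊z⌋₊ + 1)).filter Nat.Prime, ‖a p‖ ^ 2) ^ k := by
  set P := (Finset.range (⌊z⌋₊ + 1)).filter Nat.Prime
  have hprime (q : P) : (q : ℕ).Prime := (mem_filter.1 q.2).2
  have hindep : iIndepFun (fun q : P => X q) μ :=
    hXindep.precomp (g := fun q => ⟨q, hprime q⟩) fun _ _ h => Subtype.ext (Subtype.mk.inj h)
  simp_rw [← sum_coe_sort P]
  exact integral_norm_sum_mul_pow_le hindep (fun q => hXunif q (hprime q)) (fun q => a q) k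

/-- If `(X_p)_{p prime}` is a family of independent random variables, each uniformly
distributed on the unit circle, then for every `z ≥ 2`, every `a : ℕ → ℂ` and every
integer `k ≥ 1`, `𝔼[|∑_{p ≤ z} a(p) X_p|^{2k}] ≤ k! (∑_{p ≤ z} |a(p)|²)^k`. -/
theorem stmt_8 {Ω : Type*} [MeasurableSpace Ω] (μ : Measure Ω) [IsProbabilityMeasure μ]
    (X : ℕ → Ω → ℂ) (hXmeas : ∀ p, Measurable (X p))
    (hXindep : iIndepFun
      (fun p : {p : ℕ // p.Prime} => X p) μ)
    (hXunif : ∀ p : ℕ, p.Prime → μ.map (X p) = circleUniform)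
    (z : ℝ) (hz : 2 ≤ z) (a : ℕ → ℂ) (k : ℕ) (hk : 1 ≤ k) :
    (∫ ω, ‖∑ p ∈ (Finset.range (⌊z⌋₊ + 1)).filter Nat.Prime, a p * X p ω‖ ^ (2 * k) ∂μ) ≤
      (k.factorial : ℝ) *
        (∑ p ∈ (Finset.range (⌊z⌋₊ + 1)).filter Nat.Prime, ‖a p‖ ^ 2) ^ k :=
  stmt_8_general μ X hXindep hXunif z a k
end

section
/- Let J ≥ 1 be an integer and let b_1,…,b_J be real numbers with b_1 ≠ 0. Then for all real M > 0, R ≥ 0 and ε > 0, the Lebesgue measure of the set { (u, v) ∈ ℝ^J × ℝ^J : |u_j| ≤ M for all j, 0 ≤ v_j ≤ 2π for all j, and R < | ∑_{j=1}^J b_j e^{u_j + i v_j} | < R + ε } is at most (2π)^{J−1} · (2M)^{J−1} · π e^{2M} (2Rε + ε²) / b_1². -/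
/-!
Fix every coordinate except `z = u₁ + i v₁`. The sum becomes `b₁ eᶻ + c`, and `z ↦ b₁ eᶻ` is
injective on the half-open strip `0 ≤ Im z < 2π` (the line `Im z = 2π` is null) with real
Jacobian `|b₁|² e^{2 Re z} ≥ b₁² e^{-2M}`. Its image lies in the annulus `R < |w + c| < R + ε`
of area `π ((R + ε)² - R²)`, so each slice has measure at most `π e^{2M} (2Rε + ε²) / b₁²`;
integrating over the box of the remaining `2(J - 1)` coordinates gives the bound.
-/

open MeasureTheory Metric Set Real
open scoped ENNReal Complex

namespace MeasureTheory.Measure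

lemma ofReal_mul_addHaar_le_addHaar_image
    {E : Type*} [NormedAddCommGroup E] [NormedSpace ℝ E] [FiniteDimensional ℝ E]
    [MeasurableSpace E] [BorelSpace E] (μ : Measure E) [μ.IsAddHaarMeasure]
    {s : Set E} {f : E → E} {f' : E → E →L[ℝ] E} {κ : ℝ} (hs : MeasurableSet s)
    (hf' : ∀ x ∈ s, HasFDerivWithinAt f (f' x) s x) (hf : InjOn f s)
    (hκ : ∀ x ∈ s, κ ≤ |(f' x).det|) :
    ENNReal.ofReal κ * μ s ≤ μ (f '' s) := by
  rw [← lintegral_abs_det_fderiv_eq_addHaar_image μ hs hf' hf, ← setLIntegral_const]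
  exact setLIntegral_mono' hs fun x hx => ENNReal.ofReal_le_ofReal (hκ x hx)

lemma prod_apply_le_mul_of_forall_le
    {α β : Type*} [MeasurableSpace α] [MeasurableSpace β] {μ : Measure α} {ν : Measure β}
    [SFinite μ] [SFinite ν] {S : Set (α × β)} {B : Set β} {K : ℝ≥0∞} (hS : MeasurableSet S)
    (hSB : ∀ p ∈ S, p.2 ∈ B) (hK : ∀ y ∈ B, μ ((·, y) ⁻¹' S) ≤ K) :
    μ.prod ν S ≤ K * ν B := by
  have hsupp : Function.support (fun y => μ ((·, y) ⁻¹' S)) ⊆ B := fun y hy => by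
    obtain ⟨x, hx⟩ := nonempty_of_measure_ne_zero hy
    exact hSB _ hx
  rw [prod_apply_symm hS, ← setLIntegral_eq_of_support_subset hsupp, ← setLIntegral_const]
  exact setLIntegral_mono measurable_const hK

end MeasureTheory.Measure

namespace Complex

lemma det_restrictScalars_smulRight_one (d : ℂ) :
    ((ContinuousLinearMap.smulRight (1 : ℂ →L[ℂ] ℂ) d).restrictScalars ℝ).det = normSq d := by
  simp [ContinuousLinearMap.det, LinearMap.det_restrictScalars, Algebra.norm_complex_eq]

lemma injOn_exp_of_im_mem_Ico (a : ℝ) : InjOn cexp {z : ℂ | z.im ∈ Ico a (a + 2 * π)} := by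
  intro z hz w hw hzw
  obtain ⟨k, hk⟩ := exp_eq_exp_iff_exists_int.mp hzw
  have him : z.im = w.im + k * (2 * π) := by simpa using congrArg im hk
  obtain rfl : k = 0 := by
    have hk_lt : k < 1 := by exact_mod_cast (show (k : ℝ) < 1 by nlinarith [hz.2, hw.1, pi_pos])
    have hk_gt : -1 < k := by exact_mod_cast (show (-1 : ℝ) < k by nlinarith [hz.1, hw.2, pi_pos])
    omega
  simpa using hk

lemma volume_reProdIm (s t : Set ℝ) : volume (s ×ℂ t) = volume s * volume t := by
  rw [← Measure.prod_prod, ← Measure.volume_eq_prod,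
    ← volume_preserving_equiv_real_prod.measure_preimage_equiv]
  rfl

lemma volume_setOf_im_eq (a : ℝ) : volume {z : ℂ | z.im = a} = 0 := by
  have : {z : ℂ | z.im = a} = univ ×ℂ {a} := by ext; simp [mem_reProdIm]
  simp [this, volume_reProdIm]

lemma volume_ball_diff_closedBall (c : ℂ) {R r : ℝ} (hR : 0 ≤ R) (hRr : R < r) :
    volume (ball c r \ closedBall c R) = ENNReal.ofReal (π * (r ^ 2 - R ^ 2)) := by
  rw [measure_sdiff (closedBall_subset_ball hRr) measurableSet_closedBall.nullMeasurableSet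
      measure_closedBall_lt_top.ne, volume_ball, volume_closedBall, ← NNReal.coe_real_pi,
    ← ENNReal.ofReal_coe_nnreal, ← ENNReal.ofReal_pow hR, ← ENNReal.ofReal_pow (hR.trans hRr.le),
    ← ENNReal.sub_mul fun _ _ => ENNReal.ofReal_ne_top, ← ENNReal.ofReal_sub _ (by positivity),
    ← ENNReal.ofReal_mul (sub_nonneg.2 (by gcongr)), mul_comm]

lemma volume_setOf_norm_mul_exp_add_mem_Ioo_le {b : ℂ} (hb : b ≠ 0) (c : ℂ)
    {M R r : ℝ} (hR : 0 ≤ R) (hRr : R < r) :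
    volume {z ∈ Icc (-M) M ×ℂ Icc 0 (2 * π) | ‖b * cexp z + c‖ ∈ Ioo R r} ≤
      ENNReal.ofReal (π * rexp (2 * M) * (r ^ 2 - R ^ 2) / ‖b‖ ^ 2) := by
  set S := {z ∈ Icc (-M) M ×ℂ Icc 0 (2 * π) | ‖b * cexp z + c‖ ∈ Ioo R r}
  set S' := S ∩ {z | z.im < 2 * π}
  have hS' : MeasurableSet S' :=
    ((isClosed_Icc.reProdIm isClosed_Icc).measurableSet.inter
      (isOpen_Ioo.preimage (by fun_prop)).measurableSet).inter
      (isOpen_lt continuous_im continuous_const).measurableSet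
  have hSS' : volume S ≤ volume S' := by
    have : S ⊆ S' ∪ {z | z.im = 2 * π} := fun z hz =>
      hz.1.2.2.lt_or_eq.imp (fun h => ⟨hz, h⟩) id
    calc volume S ≤ volume S' + volume {z : ℂ | z.im = 2 * π} :=
          (measure_mono this).trans (measure_union_le _ _)
      _ = volume S' := by rw [volume_setOf_im_eq, add_zero]
  have hinj : InjOn (fun z => b * cexp z) S' := fun z hz w hw h =>
    injOn_exp_of_im_mem_Ico 0 (by simpa using ⟨hz.1.1.2.1, hz.2⟩)
      (by simpa using ⟨hw.1.1.2.1, hw.2⟩) (mul_left_cancel₀ hb h)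
  have hderiv : ∀ z ∈ S', HasFDerivWithinAt (fun z => b * cexp z)
      ((ContinuousLinearMap.smulRight (1 : ℂ →L[ℂ] ℂ) (b * cexp z)).restrictScalars ℝ) S' z :=
    fun z _ => (((hasDerivAt_exp z).const_mul b).hasFDerivAt.restrictScalars ℝ).hasFDerivWithinAt
  have hjac : ∀ z ∈ S', ‖b‖ ^ 2 * rexp (-(2 * M)) ≤
      |((ContinuousLinearMap.smulRight (1 : ℂ →L[ℂ] ℂ) (b * cexp z)).restrictScalars ℝ).det| := by
    intro z hz
    rw [det_restrictScalars_smulRight_one, normSq_eq_norm_sq, norm_mul, norm_exp, mul_pow,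
      ← Real.exp_nat_mul, abs_of_nonneg (by positivity)]
    have : -M ≤ z.re := hz.1.1.1.1
    gcongr
    push_cast
    linarith
  have himage : (fun z => b * cexp z) '' S' ⊆ ball (-c) r \ closedBall (-c) R := by
    rintro _ ⟨z, hz, rfl⟩
    have hdist : dist (b * cexp z) (-c) = ‖b * cexp z + c‖ := by
      rw [dist_eq_norm, sub_neg_eq_add]
    exact ⟨by simpa [hdist] using hz.1.2.2, by simpa [hdist] using hz.1.2.1⟩
  have hκ : 0 < ‖b‖ ^ 2 * rexp (-(2 * M)) := by positivity
  have key := (Measure.ofReal_mul_addHaar_le_addHaar_image volume hS' hderiv hinj hjac).trans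
    ((measure_mono himage).trans (volume_ball_diff_closedBall (-c) hR hRr).le)
  rw [mul_comm, ← ENNReal.le_div_iff_mul_le (.inl (ENNReal.ofReal_pos.2 hκ).ne')
    (.inl ENNReal.ofReal_ne_top), ← ENNReal.ofReal_div_of_pos hκ] at key
  refine hSS'.trans (key.trans_eq (congrArg ENNReal.ofReal ?_))
  rw [Real.exp_neg]
  field_simp

lemma measurePreserving_ofReal_add_ofReal_mul_I_pi (ι : Type*) [Fintype ι] :
    MeasurePreserving (fun uv : (ι → ℝ) × (ι → ℝ) => fun j => (uv.1 j : ℂ) + uv.2 j * I)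
      volume volume := by
  have hfun : (fun uv : (ι → ℝ) × (ι → ℝ) => fun j => (uv.1 j : ℂ) + uv.2 j * I) =
      (fun z j => measurableEquivRealProd.symm (z j)) ∘
        (MeasurableEquiv.arrowProdEquivProdArrow ℝ ℝ ι).symm := by
    funext uv j
    apply Complex.ext <;> simp [MeasurableEquiv.arrowProdEquivProdArrow]
  rw [hfun]
  exact (volume_preserving_pi fun _ => volume_preserving_equiv_real_prod.symm).comp
    ((volume_measurePreserving_arrowProdEquivProdArrow ℝ ℝ ι).symm _)

end Complex

lemma volume_setOf_norm_sum_mul_exp_mem_Ioo_le {n : ℕ} (b : Fin (n + 1) → ℂ) (i : Fin (n + 1))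
    (hb : b i ≠ 0) {M R r : ℝ} (hM : 0 ≤ M) (hR : 0 ≤ R) (hRr : R < r) :
    volume {z ∈ univ.pi fun _ => Icc (-M) M ×ℂ Icc 0 (2 * π) |
        ‖∑ j, b j * cexp (z j)‖ ∈ Ioo R r} ≤
      ENNReal.ofReal ((2 * M * (2 * π)) ^ n *
        (π * rexp (2 * M) * (r ^ 2 - R ^ 2) / ‖b i‖ ^ 2)) := by
  set T := {p ∈ (Icc (-M) M ×ℂ Icc 0 (2 * π)) ×ˢ univ.pi fun _ => Icc (-M) M ×ℂ Icc 0 (2 * π) |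
    ‖b i * cexp p.1 + ∑ j, b (i.succAbove j) * cexp (p.2 j)‖ ∈ Ioo R r}
  have hT : MeasurableSet T :=
    ((isClosed_Icc.reProdIm isClosed_Icc).prod
      (isClosed_set_pi fun _ _ => isClosed_Icc.reProdIm isClosed_Icc)).measurableSet.inter
      (isOpen_Ioo.preimage (by fun_prop)).measurableSet
  have hpre : {z ∈ univ.pi fun _ => Icc (-M) M ×ℂ Icc 0 (2 * π) |
      ‖∑ j, b j * cexp (z j)‖ ∈ Ioo R r} =
        MeasurableEquiv.piFinSuccAbove (fun _ => ℂ) i ⁻¹' T := by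
    ext z
    simp [T, Fin.forall_iff_succAbove i, Fin.sum_univ_succAbove _ i, Fin.removeNth]
  have hK : 0 ≤ π * rexp (2 * M) * (r ^ 2 - R ^ 2) / ‖b i‖ ^ 2 := by
    have : R ^ 2 ≤ r ^ 2 := by gcongr
    have : 0 ≤ r ^ 2 - R ^ 2 := by linarith
    positivity
  rw [hpre, (volume_preserving_piFinSuccAbove (fun _ => ℂ) i).measure_preimage
    hT.nullMeasurableSet, Measure.volume_eq_prod]
  have hslice : ∀ w, volume ((·, w) ⁻¹' T) ≤
      ENNReal.ofReal (π * rexp (2 * M) * (r ^ 2 - R ^ 2) / ‖b i‖ ^ 2) := fun w => by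
    refine (measure_mono ?_).trans (Complex.volume_setOf_norm_mul_exp_add_mem_Ioo_le hb
      (∑ j, b (i.succAbove j) * cexp (w j)) hR hRr)
    exact fun z hz => ⟨hz.1.1, hz.2⟩
  refine (Measure.prod_apply_le_mul_of_forall_le hT (fun p hp => hp.1.2)
    fun w _ => hslice w).trans_eq ?_
  simp only [volume_pi_pi, Complex.volume_reProdIm, Real.volume_Icc, Finset.prod_const,
    Finset.card_univ, Fintype.card_fin]
  rw [← ENNReal.ofReal_mul (by linarith), ← ENNReal.ofReal_pow (by nlinarith [pi_pos]),
    ← ENNReal.ofReal_mul hK]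
  ring_nf

/-- For `J ≥ 1`, real `b_1, …, b_J` with `b_1 ≠ 0`, and `M > 0`, `R ≥ 0`, `ε > 0`, the
Lebesgue measure of the set of `(u, v) ∈ ℝ^J × ℝ^J` with `|u_j| ≤ M`, `0 ≤ v_j ≤ 2π` and
`R < |∑_j b_j e^{u_j + i v_j}| < R + ε` is at most
`(2π)^{J−1} (2M)^{J−1} π e^{2M} (2Rε + ε²) / b_1²`. -/
theorem stmt_13 (J : ℕ) (hJ : 0 < J) (b : Fin J → ℝ) (hb1 : b ⟨0, hJ⟩ ≠ 0)
    (M R ε : ℝ) (hM : 0 < M) (hR : 0 ≤ R) (hε : 0 < ε) :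
    volume {uv : (Fin J → ℝ) × (Fin J → ℝ) |
        (∀ j, |uv.1 j| ≤ M) ∧ (∀ j, 0 ≤ uv.2 j ∧ uv.2 j ≤ 2 * Real.pi) ∧
        R < ‖∑ j, (b j : ℂ) *
          Complex.exp ((uv.1 j : ℂ) + (uv.2 j : ℂ) * Complex.I)‖ ∧
        ‖∑ j, (b j : ℂ) *
          Complex.exp ((uv.1 j : ℂ) + (uv.2 j : ℂ) * Complex.I)‖ < R + ε} ≤
      ENNReal.ofReal ((2 * Real.pi) ^ (J - 1) * (2 * M) ^ (J - 1) *
        Real.pi * Real.exp (2 * M) * (2 * R * ε + ε ^ 2) / (b ⟨0, hJ⟩) ^ 2) := by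
  obtain ⟨n, rfl⟩ := Nat.exists_eq_add_one_of_ne_zero hJ.ne'
  set S := {z ∈ univ.pi fun _ => Icc (-M) M ×ℂ Icc 0 (2 * π) |
    ‖∑ j, (b j : ℂ) * cexp (z j)‖ ∈ Ioo R (R + ε)}
  have hS : MeasurableSet S :=
    (MeasurableSet.univ_pi fun _ => (isClosed_Icc.reProdIm isClosed_Icc).measurableSet).inter
      (isOpen_Ioo.preimage (by fun_prop)).measurableSet
  calc _ = volume S := by
        rw [← (Complex.measurePreserving_ofReal_add_ofReal_mul_I_pi _).measure_preimage
          hS.nullMeasurableSet]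
        congr 1
        ext uv
        simp [S, Complex.mem_reProdIm, abs_le, forall_and, and_assoc]
    _ ≤ _ := volume_setOf_norm_sum_mul_exp_mem_Ioo_le (fun j => (b j : ℂ)) ⟨0, hJ⟩
        (mod_cast hb1) hM.le hR (lt_add_of_pos_right R hε)
    _ = _ := by
        rw [Complex.norm_real, Real.norm_eq_abs, sq_abs, Nat.add_sub_cancel,
          mul_comm (2 * M), mul_pow]
        ring_nf
end

section
/- There is an absolute constant A > 0 with the following property. Let s0 ∈ ℂ, let 0 < r ≤ 1, and let f be analytic on an open neighbourhood of the closed disk {w ∈ ℂ : |w − s0| ≤ r} with f(s0) ≠ 0. For 0 < δ < r/2 let Z denote the (finite) set of zeros ρ of f with |ρ − s0| ≤ r − δ, let m_ρ denote the order of the zero of f at ρ, and set N := ∑_{ρ ∈ Z} m_ρ and M := max_{|w − s0| ≤ r} |f(w)/f(s0)| + 3. Then for every z with |z − s0| ≤ r − 2δ and f(z) ≠ 0, | f'(z)/f(z) − ∑_{ρ ∈ Z} m_ρ/(z − ρ) | ≤ A · δ^{−2} · ( log M + N·(log(1/δ) + 1) ). -/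
/-!
Divide `f` by the polynomial `P(w) = ∏_{ρ ∈ Z} (w - ρ)^{m_ρ}`. The quotient `g` is zero-free on
the disk of radius `r - δ`, and since `|P| ≥ δ^N` on the circle `|w - s0| = r` while
`|P(s0)| ≤ 1` (as `r ≤ 1`), the maximum principle gives `|g(w)| ≤ (M / δ^N) |g(s0)|`.
A holomorphic logarithm `h` of `g / g(s0)` therefore has `Re h ≤ log M + N log(1/δ)`;
Borel–Carathéodory turns this into a bound `O((log M + N log(1/δ))/δ)` for `|h|` on the disk of
radius `r - 3δ/2`, and Cauchy's estimate on the disk of radius `δ/2` about `z` bounds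
`h'(z) = g'(z)/g(z) = f'(z)/f(z) - ∑ m_ρ/(z - ρ)`.
-/

open Filter Topology Metric

noncomputable def zerosProd (Z : Finset ℂ) (m : ℂ → ℕ) (w : ℂ) : ℂ :=
  ∏ ρ ∈ Z, (w - ρ) ^ m ρ

section zerosProd

variable {Z : Finset ℂ} {m : ℂ → ℕ} {w : ℂ}

lemma analyticAt_zerosProd (Z : Finset ℂ) (m : ℂ → ℕ) (w : ℂ) : AnalyticAt ℂ (zerosProd Z m) w :=
  Finset.analyticAt_fun_prod _ fun _ _ => (analyticAt_id.sub analyticAt_const).pow _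

lemma zerosProd_ne_zero (hw : w ∉ Z) : zerosProd Z m w ≠ 0 :=
  Finset.prod_ne_zero_iff.mpr fun _ hρ => pow_ne_zero _ (sub_ne_zero.mpr fun h => hw (h ▸ hρ))

lemma zerosProd_eq_mul_zerosProd_erase {ρ : ℂ} (hρ : ρ ∈ Z) :
    zerosProd Z m w = (w - ρ) ^ m ρ * zerosProd (Z.erase ρ) m w :=
  (Finset.mul_prod_erase Z _ hρ).symm

lemma pow_sum_le_norm_zerosProd {δ : ℝ} (hδ : 0 ≤ δ) (h : ∀ ρ ∈ Z, δ ≤ ‖w - ρ‖) :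
    δ ^ (∑ ρ ∈ Z, m ρ) ≤ ‖zerosProd Z m w‖ := by
  rw [zerosProd, norm_prod, ← Finset.prod_pow_eq_pow_sum]
  refine Finset.prod_le_prod (fun _ _ => by positivity) fun ρ hρ => ?_
  rw [norm_pow]
  exact pow_le_pow_left₀ hδ (h ρ hρ) _

lemma norm_zerosProd_le_one (h : ∀ ρ ∈ Z, ‖w - ρ‖ ≤ 1) : ‖zerosProd Z m w‖ ≤ 1 := by
  rw [zerosProd, norm_prod]
  refine Finset.prod_le_one (fun _ _ => by positivity) fun ρ hρ => ?_
  rw [norm_pow]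
  exact pow_le_one₀ (norm_nonneg _) (h ρ hρ)

lemma logDeriv_zerosProd (hw : w ∉ Z) :
    logDeriv (zerosProd Z m) w = ∑ ρ ∈ Z, (m ρ : ℂ) / (w - ρ) := by
  have hne : ∀ ρ ∈ Z, w - ρ ≠ 0 := fun ρ hρ => sub_ne_zero.mpr fun h => hw (h ▸ hρ)
  change logDeriv (fun w => ∏ ρ ∈ Z, (w - ρ) ^ m ρ) w = _
  rw [logDeriv_prod (f := fun ρ w => (w - ρ) ^ m ρ) (fun ρ hρ => pow_ne_zero _ (hne ρ hρ))
    fun ρ _ => (differentiableAt_id.sub_const ρ).pow _]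
  refine Finset.sum_congr rfl fun ρ hρ => ?_
  rw [logDeriv_fun_pow (f := (· - ρ)) (differentiableAt_id.sub_const ρ), logDeriv_apply,
    deriv_sub_const, deriv_id'', mul_one_div]

theorem exists_analyticOnNhd_eq_mul_zerosProd {f : ℂ → ℂ} {S : Set ℂ}
    (hf : AnalyticOnNhd ℂ f S)
    (hm : ∀ ρ ∈ Z, ∃ g : ℂ → ℂ, AnalyticAt ℂ g ρ ∧ g ρ ≠ 0 ∧
      ∀ᶠ z in 𝓝 ρ, f z = (z - ρ) ^ m ρ * g z) :
    ∃ g : ℂ → ℂ, AnalyticOnNhd ℂ g S ∧ (∀ ρ ∈ Z, g ρ ≠ 0) ∧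
      ∀ w ∉ Z, f w = g w * zerosProd Z m w := by
  classical
  choose! G hG_an hG_ne hfG using hm
  -- at a zero `ρ`, `g` takes the value of the removable singularity of `f / zerosProd Z m`
  set g : ℂ → ℂ := fun w =>
    if w ∈ Z then G w w / zerosProd (Z.erase w) m w else f w / zerosProd Z m w
  have hg_off : ∀ w ∉ Z, g w = f w / zerosProd Z m w := fun w hw => if_neg hw
  have hg_near : ∀ ρ ∈ Z, g =ᶠ[𝓝 ρ] fun w => G ρ w / zerosProd (Z.erase ρ) m w := by
    intro ρ hρ
    have hfar : ∀ᶠ w in 𝓝 ρ, w ∉ Z.erase ρ :=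
      (Z.erase ρ).finite_toSet.isClosed.compl_mem_nhds (Finset.notMem_erase ρ Z)
    filter_upwards [hfG ρ hρ, hfar] with w hfw hw
    by_cases hwZ : w ∈ Z
    · obtain rfl : w = ρ := by_contra fun h => hw (Finset.mem_erase.mpr ⟨h, hwZ⟩)
      exact if_pos hwZ
    · have hwρ : w - ρ ≠ 0 := sub_ne_zero.mpr fun h => hwZ (h ▸ hρ)
      rw [hg_off w hwZ, hfw, zerosProd_eq_mul_zerosProd_erase hρ,
        mul_div_mul_left _ _ (pow_ne_zero _ hwρ)]
  refine ⟨g, fun w hw => ?_, fun ρ hρ => ?_, fun w hw => ?_⟩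
  · by_cases hwZ : w ∈ Z
    · exact ((hG_an w hwZ).div (analyticAt_zerosProd _ m w)
        (zerosProd_ne_zero (Finset.notMem_erase w Z))).congr (hg_near w hwZ).symm
    · have hfar : ∀ᶠ x in 𝓝 w, x ∉ Z :=
        Z.finite_toSet.isClosed.compl_mem_nhds hwZ
      exact ((hf w hw).div (analyticAt_zerosProd Z m w) (zerosProd_ne_zero hwZ)).congr
        (hfar.mono fun x hx => (hg_off x hx).symm)
  · rw [(hg_near ρ hρ).self_of_nhds]
    exact div_ne_zero (hG_ne ρ hρ) (zerosProd_ne_zero (Finset.notMem_erase ρ Z))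
  · rw [hg_off w hw, div_mul_cancel₀ _ (zerosProd_ne_zero hw)]

lemma logDeriv_eq_logDeriv_add_sum {f g : ℂ → ℂ} (hfg : ∀ w ∉ Z, f w = g w * zerosProd Z m w)
    (hw : w ∉ Z) (hg : DifferentiableAt ℂ g w) (hgw : g w ≠ 0) :
    logDeriv f w = logDeriv g w + ∑ ρ ∈ Z, (m ρ : ℂ) / (w - ρ) := by
  have hfar : ∀ᶠ x in 𝓝 w, x ∉ Z := Z.finite_toSet.isClosed.compl_mem_nhds hw
  rw [(logDeriv_congr_nhds (hfar.mono hfg)).self_of_nhds,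
    logDeriv_mul w hgw (zerosProd_ne_zero hw) hg (analyticAt_zerosProd Z m w).differentiableAt,
    logDeriv_zerosProd hw]

theorem norm_le_div_pow_of_eq_mul_zerosProd {f g : ℂ → ℂ} {c : ℂ} {r δ B : ℝ} (hr : 0 < r)
    (hδ : 0 < δ) (hg : DifferentiableOn ℂ g (closedBall c r))
    (hfg : ∀ w ∉ Z, f w = g w * zerosProd Z m w) (hZ : ∀ ρ ∈ Z, dist ρ c ≤ r - δ)
    (hfB : ∀ w ∈ sphere c r, ‖f w‖ ≤ B) (hw : w ∈ closedBall c r) :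
    ‖g w‖ ≤ B / δ ^ ∑ ρ ∈ Z, m ρ := by
  refine Complex.norm_le_of_forall_mem_frontier_norm_le isBounded_ball
    (DifferentiableOn.diffContOnCl (by rwa [closure_ball c hr.ne'])) (fun x hx => ?_)
    (by rwa [closure_ball c hr.ne'])
  rw [frontier_ball c hr.ne'] at hx
  have hxρ : ∀ ρ ∈ Z, δ ≤ ‖x - ρ‖ := fun ρ hρ => by
    rw [← dist_eq_norm]
    linarith [dist_triangle x ρ c, mem_sphere.mp hx, hZ ρ hρ]
  have hxZ : x ∉ Z := fun h => by simpa [hδ.not_ge] using hxρ x h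
  rw [le_div_iff₀ (by positivity)]
  calc ‖g x‖ * δ ^ ∑ ρ ∈ Z, m ρ ≤ ‖g x‖ * ‖zerosProd Z m x‖ := by
        gcongr
        exact pow_sum_le_norm_zerosProd hδ.le hxρ
    _ = ‖f x‖ := by rw [hfg x hxZ, norm_mul]
    _ ≤ B := hfB x hx

theorem norm_le_div_pow_mul_norm_of_eq_mul_zerosProd {f g : ℂ → ℂ} {c : ℂ} {r δ M : ℝ}
    (hr : 0 < r) (hr1 : r ≤ 1) (hδ : 0 < δ) (hM : 0 ≤ M)
    (hg : DifferentiableOn ℂ g (closedBall c r)) (hfg : ∀ w ∉ Z, f w = g w * zerosProd Z m w)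
    (hZ : ∀ ρ ∈ Z, dist ρ c ≤ r - δ) (hc : c ∉ Z) (hfM : ∀ w ∈ sphere c r, ‖f w‖ ≤ M * ‖f c‖)
    (hw : w ∈ closedBall c r) :
    ‖g w‖ ≤ M / δ ^ (∑ ρ ∈ Z, m ρ) * ‖g c‖ := by
  have hfc : ‖f c‖ ≤ ‖g c‖ := by
    rw [hfg c hc, norm_mul]
    refine mul_le_of_le_one_right (norm_nonneg _) (norm_zerosProd_le_one fun ρ hρ => ?_)
    rw [← dist_eq_norm, dist_comm]
    linarith [hZ ρ hρ]
  calc ‖g w‖ ≤ M * ‖f c‖ / δ ^ ∑ ρ ∈ Z, m ρ :=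
        norm_le_div_pow_of_eq_mul_zerosProd hr hδ hg hfg hZ hfM hw
    _ ≤ M / δ ^ (∑ ρ ∈ Z, m ρ) * ‖g c‖ := by
        rw [div_mul_eq_mul_div]
        gcongr

theorem exists_eq_mul_zerosProd_nonvanishing_norm_le {f : ℂ → ℂ} {c : ℂ} {r δ M : ℝ}
    (hr : 0 < r) (hr1 : r ≤ 1) (hδ : 0 < δ) (hM : 0 ≤ M) (hf : AnalyticOnNhd ℂ f (closedBall c r))
    (hfc : f c ≠ 0) (hfM : ∀ w ∈ closedBall c r, ‖f w‖ ≤ M * ‖f c‖)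
    (hZ : ∀ ρ : ℂ, ρ ∈ Z ↔ ρ ∈ closedBall c (r - δ) ∧ f ρ = 0)
    (hm : ∀ ρ ∈ Z, ∃ g : ℂ → ℂ, AnalyticAt ℂ g ρ ∧ g ρ ≠ 0 ∧
      ∀ᶠ z in 𝓝 ρ, f z = (z - ρ) ^ m ρ * g z) :
    ∃ g : ℂ → ℂ, AnalyticOnNhd ℂ g (closedBall c r) ∧ (∀ w ∈ closedBall c (r - δ), g w ≠ 0) ∧
      (∀ w ∉ Z, f w = g w * zerosProd Z m w) ∧
      ∀ w ∈ closedBall c r, ‖g w‖ ≤ M / δ ^ (∑ ρ ∈ Z, m ρ) * ‖g c‖ := by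
  obtain ⟨g, hg, hgZ, hfg⟩ := exists_analyticOnNhd_eq_mul_zerosProd hf hm
  refine ⟨g, hg, fun w hw => ?_, hfg, fun w hw => ?_⟩
  · by_cases hwZ : w ∈ Z
    · exact hgZ w hwZ
    · exact left_ne_zero_of_mul (hfg w hwZ ▸ fun h => hwZ ((hZ w).2 ⟨hw, h⟩))
  · exact norm_le_div_pow_mul_norm_of_eq_mul_zerosProd hr hr1 hδ hM hg.differentiableOn hfg
      (fun ρ hρ => ((hZ ρ).1 hρ).1) (fun h => hfc ((hZ c).1 h).2)
      (fun x hx => hfM x (sphere_subset_closedBall hx)) hw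

end zerosProd

theorem le_biSup_of_isCompact {X : Type*} [TopologicalSpace X] {K : Set X} {F : X → ℝ}
    (hK : IsCompact K) (hF : ContinuousOn F K) {x : X} (hx : x ∈ K) : F x ≤ ⨆ y ∈ K, F y :=
  le_ciSup₂ (f := fun y (_ : y ∈ K) => F y) ((hK.bddAbove_image hF).mono
    (Set.iUnion_subset fun _ => Set.range_subset_iff.mpr fun hy => Set.mem_image_of_mem F hy)) x hx

theorem exists_hasDerivAt_logDeriv_and_eq_mul_exp {g : ℂ → ℂ} {c : ℂ} {R : ℝ}
    (hg : DifferentiableOn ℂ g (ball c R)) (hg0 : ∀ w ∈ ball c R, g w ≠ 0) :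
    ∃ h : ℂ → ℂ, h c = 0 ∧ (∀ w ∈ ball c R, HasDerivAt h (logDeriv g w) w) ∧
      ∀ w ∈ ball c R, g w = g c * Complex.exp (h w) := by
  obtain ⟨h, hc, hh⟩ := ((hg.deriv isOpen_ball).div hg hg0).isExactOn_ball.with_val_at c 0
  refine ⟨h, hc, hh, fun w hw => ?_⟩
  have hderiv : ∀ x ∈ ball c R, HasDerivAt (fun y => g y * Complex.exp (-h y)) 0 x := by
    intro x hx
    have hgx := (hg.differentiableAt (isOpen_ball.mem_nhds hx)).hasDerivAt
    refine (hgx.mul (hh x hx).neg.cexp).congr_deriv ?_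
    simp only [Pi.div_apply, Pi.neg_apply]
    field_simp [hg0 x hx]
    ring
  have hconst := isOpen_ball.is_const_of_deriv_eq_zero (convex_ball c R).isPreconnected
    (fun x hx => (hderiv x hx).differentiableAt.differentiableWithinAt)
    (fun x hx => (hderiv x hx).deriv) hw (mem_ball_self (pos_of_mem_ball hw))
  simp only [hc, neg_zero, Complex.exp_zero, mul_one, Complex.exp_neg] at hconst
  rw [← hconst, inv_mul_cancel_right₀ (Complex.exp_ne_zero _)]

theorem norm_le_of_re_le_of_mem_ball {h : ℂ → ℂ} {c z : ℂ} {R U : ℝ} (hU : 0 < U)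
    (hh : DifferentiableOn ℂ h (ball c R)) (hre : ∀ w ∈ ball c R, (h w).re ≤ U) (hc : h c = 0)
    (hz : z ∈ ball c R) : ‖h z‖ ≤ 2 * U * ‖z - c‖ / (R - ‖z - c‖) := by
  have hmaps : Set.MapsTo (· + c) (ball 0 R) (ball c R) := fun w hw => by
    simpa [dist_eq_norm] using hw
  simpa using Complex.borelCaratheodory_zero (f := fun w => h (w + c)) hU
    (hh.comp (differentiableOn_id.add_const c) hmaps) (fun w hw => hre _ (hmaps hw))
    (pos_of_mem_ball hz) (by simpa [dist_eq_norm] using hz : z - c ∈ ball 0 R) (by simpa using hc)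

theorem norm_logDeriv_le_of_norm_le_mul {g : ℂ → ℂ} {c z : ℂ} {R K δ : ℝ} (hK : 1 < K)
    (hδ : 0 < δ) (hg : DifferentiableOn ℂ g (ball c R)) (hg0 : ∀ w ∈ ball c R, g w ≠ 0)
    (hgK : ∀ w ∈ ball c R, ‖g w‖ ≤ K * ‖g c‖) (hz : dist z c + δ ≤ R) :
    ‖logDeriv g z‖ ≤ 8 * Real.log K * R / δ ^ 2 := by
  obtain ⟨h, hc, hh, hgh⟩ := exists_hasDerivAt_logDeriv_and_eq_mul_exp hg hg0
  set U := Real.log K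
  have hU : 0 < U := Real.log_pos hK
  have hR : 0 < R := by linarith [dist_nonneg (x := z) (y := c)]
  have hcR : c ∈ ball c R := mem_ball_self hR
  have hre : ∀ w ∈ ball c R, (h w).re ≤ U := by
    intro w hw
    have hw' := hgK w hw
    rw [hgh w hw, norm_mul, Complex.norm_exp, mul_comm] at hw'
    exact (Real.le_log_iff_exp_le (by linarith)).2
      (le_of_mul_le_mul_right hw' (norm_pos_iff.mpr (hg0 c hcR)))
  have hsub : closedBall z (δ / 2) ⊆ ball c R := closedBall_subset_ball' (by linarith)
  have hbound : ∀ w ∈ sphere z (δ / 2), ‖h w‖ ≤ 4 * U * R / δ := by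
    intro w hw
    have hwc : ‖w - c‖ ≤ R - δ / 2 := by
      rw [← dist_eq_norm]
      linarith [dist_triangle w z c, mem_sphere.mp hw]
    calc ‖h w‖ ≤ 2 * U * ‖w - c‖ / (R - ‖w - c‖) :=
          norm_le_of_re_le_of_mem_ball hU
            (fun x hx => (hh x hx).differentiableAt.differentiableWithinAt) hre hc
            (hsub (sphere_subset_closedBall hw))
      _ ≤ 2 * U * R / (δ / 2) := by gcongr <;> nlinarith
      _ = 4 * U * R / δ := by ring
  have hdiff : DiffContOnCl ℂ h (ball z (δ / 2)) := by
    refine DifferentiableOn.diffContOnCl ?_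
    rw [closure_ball z (by positivity)]
    exact fun x hx => (hh x (hsub hx)).differentiableAt.differentiableWithinAt
  calc ‖logDeriv g z‖ = ‖deriv h z‖ := by
        rw [(hh z (hsub (mem_closedBall_self (by positivity)))).deriv]
    _ ≤ 4 * U * R / δ / (δ / 2) :=
        Complex.norm_deriv_le_of_forall_mem_sphere_norm_le (by positivity) hdiff hbound
    _ = 8 * U * R / δ ^ 2 := by field_simp; ring

/-- Landau-type lemma: there is an absolute constant `A > 0` such that whenever `f` is
analytic on a neighbourhood of the closed disk of radius `r ≤ 1` about `s0` with
`f(s0) ≠ 0`, `0 < δ < r/2`, `Z` is the (finite) set of zeros of `f` in the closed disk of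
radius `r − δ`, and `m ρ` is the order of the zero of `f` at each `ρ ∈ Z`, then for every
`z` with `|z − s0| ≤ r − 2δ` and `f(z) ≠ 0`,
`|f'(z)/f(z) − ∑_{ρ ∈ Z} m_ρ/(z−ρ)| ≤ A δ^{−2} (log M + N (log(1/δ) + 1))`,
where `M = max_{|w−s0| ≤ r} |f(w)/f(s0)| + 3` and `N = ∑_{ρ ∈ Z} m_ρ`. -/
theorem stmt_18 :
    ∃ A : ℝ, 0 < A ∧
      ∀ (s0 : ℂ) (r : ℝ), 0 < r → r ≤ 1 →
      ∀ f : ℂ → ℂ, AnalyticOnNhd ℂ f (closedBall s0 r) → f s0 ≠ 0 →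
      ∀ δ : ℝ, 0 < δ → δ < r / 2 →
      ∀ (Z : Finset ℂ) (m : ℂ → ℕ),
        (∀ ρ : ℂ, ρ ∈ Z ↔ ρ ∈ closedBall s0 (r - δ) ∧ f ρ = 0) →
        (∀ ρ ∈ Z, ∃ g : ℂ → ℂ, AnalyticAt ℂ g ρ ∧ g ρ ≠ 0 ∧
          ∀ᶠ z in nhds ρ, f z = (z - ρ) ^ (m ρ) * g z) →
        ∀ z : ℂ, z ∈ closedBall s0 (r - 2 * δ) → f z ≠ 0 →
          ‖deriv f z / f z - ∑ ρ ∈ Z, (m ρ : ℂ) / (z - ρ)‖ ≤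
            A / δ ^ 2 *
              (Real.log ((⨆ w ∈ closedBall s0 r, ‖f w / f s0‖) + 3) +
                (∑ ρ ∈ Z, (m ρ : ℝ)) * (Real.log (1 / δ) + 1)) := by
  refine ⟨8, by norm_num, ?_⟩
  intro s0 r hr hr1 f hf hfs0 δ hδ hδr Z m hZ hm z hz hfz
  set M := ⨆ w ∈ closedBall s0 r, ‖f w / f s0‖
  set N := ∑ ρ ∈ Z, m ρ
  have hfM : ∀ w ∈ closedBall s0 r, ‖f w‖ ≤ M * ‖f s0‖ := fun w hw =>
    (div_le_iff₀ (norm_pos_iff.2 hfs0)).1 (norm_div (f w) _ ▸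
      le_biSup_of_isCompact (isCompact_closedBall s0 r) (hf.continuousOn.div_const _).norm hw)
  have hM : 1 ≤ M := by simpa [hfs0] using hfM s0 (mem_closedBall_self hr.le)
  obtain ⟨g, hg, hg0, hfg, hgM⟩ := exists_eq_mul_zerosProd_nonvanishing_norm_le (M := M + 3) hr
    hr1 hδ (by linarith) hf hfs0 (fun w hw => (hfM w hw).trans (by gcongr; linarith)) hZ hm
  have hK : 1 < (M + 3) / δ ^ N :=
    (one_lt_div (by positivity)).2 (by linarith [pow_le_one₀ hδ.le (by linarith : δ ≤ 1) (n := N)])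
  have hzr : z ∈ closedBall s0 (r - δ) := closedBall_subset_closedBall (by linarith) hz
  have hball : ball s0 (r - δ) ⊆ closedBall s0 r :=
    ball_subset_closedBall.trans (closedBall_subset_closedBall (by linarith))
  rw [← logDeriv_apply, logDeriv_eq_logDeriv_add_sum hfg (fun h => hfz ((hZ z).1 h).2)
    (hg z (closedBall_subset_closedBall (by linarith) hzr)).differentiableAt (hg0 z hzr),
    add_sub_cancel_right, ← Nat.cast_sum]
  calc ‖logDeriv g z‖ ≤ 8 * Real.log ((M + 3) / δ ^ N) * (r - δ) / δ ^ 2 :=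
        norm_logDeriv_le_of_norm_le_mul hK hδ (hg.differentiableOn.mono hball)
          (fun w hw => hg0 w (ball_subset_closedBall hw)) (fun w hw => hgM w (hball hw))
          (by linarith [mem_closedBall.1 hz])
    _ ≤ 8 * Real.log ((M + 3) / δ ^ N) * 1 / δ ^ 2 := by
        have := Real.log_pos hK
        gcongr
        linarith
    _ = 8 / δ ^ 2 * (Real.log (M + 3) + N * Real.log (1 / δ)) := by
        rw [Real.log_div (by linarith) (by positivity), Real.log_pow, one_div, Real.log_inv]
        ring
    _ ≤ _ := by
        gcongr
        linarith [Nat.cast_nonneg (α := ℝ) N]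
end
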